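/- Let N ≥ 2 and let Ω = { (x', x_N) ∈ ℝ^{N−1} × ℝ : |x'| < 1 } be the rectilinear wave-guide with circular cross-section. Let V : Ω → ℝ be measurable and satisfy −|x'|²/(1 − |x'|²)² ≤ V(x', x_N) ≤ 0 for almost every (x', x_N) ∈ Ω. Then for every smooth function φ : ℝ^N → ℝ with compact support contained in Ω one has ∫_Ω |∇φ|² dx + ∫_Ω V φ² dx ≥ (N − 1) · ∫_Ω φ² dx. -/

import Mathlib

/-!
On `Ω = {|x'| < 1}` consider the vector field `F(x) = x' / (1 - |x'|²)` (no `x_N` component).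
A direct computation gives `div F - |F|² = (N - 1) / (1 - |x'|²) + |x'|² / (1 - |x'|²)²`, which is
at least `(N - 1) + |x'|² / (1 - |x'|²)²`. Integrating `φ² div F` by parts and using
`-2 φ ∇φ · F ≤ |∇φ|² + φ² |F|²` yields `∫ φ² (div F - |F|²) ≤ ∫ |∇φ|²`, and the lower bound on `V`
finishes the proof.
-/

open MeasureTheory

/-- The Euclidean norm of the cross-section part `x' = (x₁, …, x_{N-1})` of a point
`x = (x', x_N) ∈ ℝ^N`, i.e. of the vector of all coordinates except the last one. -/
noncomputable def crossNorm {N : ℕ} (x : EuclideanSpace ℝ (Fin N)) : ℝ :=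
  Real.sqrt (∑ i ∈ Finset.univ.filter (fun i : Fin N => (i : ℕ) < N - 1), (x i) ^ 2)

theorem HasCompactSupport.integrable_mul_of_continuousOn {X : Type*} [TopologicalSpace X]
    [T2Space X] [MeasurableSpace X] [OpensMeasurableSpace X] {μ : Measure X}
    [IsLocallyFiniteMeasure μ] {u f : X → ℝ} {U : Set X} (huc : HasCompactSupport u)
    (hu : Continuous u) (huU : tsupport u ⊆ U) (hf : ContinuousOn f U) :
    Integrable (fun x => u x * f x) μ :=
  (integrableOn_iff_integrable_of_support_subset
    ((Function.support_mul_subset_left u f).trans (subset_tsupport u))).mp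
    ((hu.continuousOn.mul (hf.mono huU)).integrableOn_compact huc)

theorem integral_mul_fderiv_eq_neg_fderiv_mul_of_contDiffOn {E : Type*} [NormedAddCommGroup E]
    [NormedSpace ℝ E] [FiniteDimensional ℝ E] [MeasurableSpace E] [BorelSpace E] {μ : Measure E}
    [μ.IsAddHaarMeasure] {U : Set E} (hU : IsOpen U) {u g : E → ℝ} (hu : ContDiff ℝ 1 u)
    (huc : HasCompactSupport u) (huU : tsupport u ⊆ U)
    (hg : ContDiffOn ℝ 1 g U) (v : E) :
    ∫ x, u x * fderiv ℝ g x v ∂μ = -∫ x, fderiv ℝ u x v * g x ∂μ := by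
  have hu' : Continuous fun x => fderiv ℝ u x v :=
    (hu.continuous_fderiv one_ne_zero).clm_apply continuous_const
  refine integral_mul_fderiv_eq_neg_fderiv_mul_of_integrable ?_ ?_ ?_
    (fun x _ => hu.differentiable one_ne_zero x)
    fun x hx => (hg.differentiableOn one_ne_zero x (huU hx)).differentiableAt
      (hU.mem_nhds (huU hx))
  · exact (huc.fderiv_apply ℝ v).integrable_mul_of_continuousOn hu'
      ((tsupport_fderiv_apply_subset ℝ v).trans huU) hg.continuousOn
  · exact huc.integrable_mul_of_continuousOn hu.continuous huU
      ((hg.continuousOn_fderiv_of_isOpen hU le_rfl).clm_apply continuousOn_const)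
  · exact huc.integrable_mul_of_continuousOn hu.continuous huU hg.continuousOn

theorem HasCompactSupport.integrable_norm_gradient_sq {E : Type*} [NormedAddCommGroup E]
    [InnerProductSpace ℝ E] [CompleteSpace E] [MeasurableSpace E] [OpensMeasurableSpace E]
    {μ : Measure E} [IsFiniteMeasureOnCompacts μ] {φ : E → ℝ} (hφ : ContDiff ℝ 1 φ)
    (hφc : HasCompactSupport φ) : Integrable (fun x => ‖gradient φ x‖ ^ 2) μ := by
  have hc : Continuous fun x => ‖gradient φ x‖ ^ 2 :=
    (((InnerProductSpace.toDual ℝ _).symm.continuous.comp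
      (hφ.continuous_fderiv one_ne_zero)).norm).pow 2
  exact hc.integrable_of_hasCompactSupport
    ((hφc.fderiv ℝ).comp_left (g := fun L => ‖(InnerProductSpace.toDual ℝ _).symm L‖ ^ 2)
      (by simp))

theorem neg_two_mul_sum_mul_le_sum_sq_add_sq_mul_sum_sq {ι : Type*} (s : Finset ι)
    (a b : ι → ℝ) (c : ℝ) :
    -(2 * c * ∑ i ∈ s, a i * b i) ≤ ∑ i ∈ s, a i ^ 2 + c ^ 2 * ∑ i ∈ s, b i ^ 2 := by
  have hexpand : ∑ i ∈ s, (a i + c * b i) ^ 2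
      = ∑ i ∈ s, a i ^ 2 + 2 * c * ∑ i ∈ s, a i * b i + c ^ 2 * ∑ i ∈ s, b i ^ 2 := by
    rw [Finset.mul_sum, Finset.mul_sum, ← Finset.sum_add_distrib, ← Finset.sum_add_distrib]
    exact Finset.sum_congr rfl fun i _ => by ring
  linarith [Finset.sum_nonneg fun i (_ : i ∈ s) => sq_nonneg (a i + c * b i)]

section

variable {ι : Type*} [Fintype ι] [DecidableEq ι]

theorem EuclideanSpace.gradient_apply (f : EuclideanSpace ℝ ι → ℝ) (x : EuclideanSpace ℝ ι)
    (i : ι) : gradient f x i = fderiv ℝ f x (EuclideanSpace.single i 1) := by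
  rw [← toDual_gradient, InnerProductSpace.toDual_apply_apply, EuclideanSpace.inner_single_right]
  simp

theorem sum_sq_fderiv_single_le_norm_gradient_sq (s : Finset ι) (f : EuclideanSpace ℝ ι → ℝ)
    (x : EuclideanSpace ℝ ι) :
    ∑ i ∈ s, fderiv ℝ f x (EuclideanSpace.single i 1) ^ 2 ≤ ‖gradient f x‖ ^ 2 := by
  rw [EuclideanSpace.real_norm_sq_eq]
  simp_rw [EuclideanSpace.gradient_apply]
  exact Finset.sum_le_sum_of_subset_of_nonneg s.subset_univ fun i _ _ => sq_nonneg _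

theorem integral_sq_mul_sum_fderiv_eq_neg {U : Set (EuclideanSpace ℝ ι)} (hU : IsOpen U)
    {φ : EuclideanSpace ℝ ι → ℝ} (hφ : ContDiff ℝ 1 φ) (hφc : HasCompactSupport φ)
    (hφU : tsupport φ ⊆ U) (s : Finset ι) {F : ι → EuclideanSpace ℝ ι → ℝ}
    (hF : ∀ i ∈ s, ContDiffOn ℝ 1 (F i) U) :
    ∫ x, φ x ^ 2 * ∑ i ∈ s, fderiv ℝ (F i) x (EuclideanSpace.single i 1)
      = -∫ x, 2 * φ x * ∑ i ∈ s, fderiv ℝ φ x (EuclideanSpace.single i 1) * F i x := by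
  set e : ι → EuclideanSpace ℝ ι := fun i => EuclideanSpace.single i 1
  have hφ2 : ContDiff ℝ 1 fun x => φ x ^ 2 := hφ.pow 2
  have hφ2c : HasCompactSupport fun x => φ x ^ 2 :=
    hφc.comp_left (g := (· ^ 2)) (zero_pow two_ne_zero)
  have hφ2U : tsupport (fun x => φ x ^ 2) ⊆ U :=
    (tsupport_comp_subset (g := (· ^ 2)) (zero_pow two_ne_zero) φ).trans hφU
  have hderiv : ∀ x v, fderiv ℝ (fun y => φ y ^ 2) x v = 2 * φ x * fderiv ℝ φ x v := by
    intro x v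
    rw [fderiv_fun_pow 2 (hφ.differentiable one_ne_zero x)]
    simp
  have hint_div : ∀ i ∈ s, Integrable fun x => φ x ^ 2 * fderiv ℝ (F i) x (e i) := fun i hi =>
    hφ2c.integrable_mul_of_continuousOn hφ2.continuous hφ2U
      (((hF i hi).continuousOn_fderiv_of_isOpen hU le_rfl).clm_apply continuousOn_const)
  have hint_flux : ∀ i ∈ s, Integrable fun x => fderiv ℝ (fun y => φ y ^ 2) x (e i) * F i x :=
    fun i hi => (hφ2c.fderiv_apply ℝ (e i)).integrable_mul_of_continuousOn
      ((hφ2.continuous_fderiv one_ne_zero).clm_apply continuous_const)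
      ((tsupport_fderiv_apply_subset ℝ (e i)).trans hφ2U) (hF i hi).continuousOn
  simp_rw [Finset.mul_sum]
  rw [integral_finsetSum s hint_div, Finset.sum_congr rfl fun i hi =>
      integral_mul_fderiv_eq_neg_fderiv_mul_of_contDiffOn hU hφ2 hφ2c hφ2U (hF i hi) (e i),
    Finset.sum_neg_distrib, ← integral_finsetSum s hint_flux]
  simp_rw [hderiv, mul_assoc]
  rfl

theorem integral_mul_sq_le_integral_norm_gradient_sq {U : Set (EuclideanSpace ℝ ι)}
    (hU : IsOpen U) {φ : EuclideanSpace ℝ ι → ℝ} (hφ : ContDiff ℝ 1 φ)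
    (hφc : HasCompactSupport φ) (hφU : tsupport φ ⊆ U) (s : Finset ι)
    {F : ι → EuclideanSpace ℝ ι → ℝ} (hF : ∀ i ∈ s, ContDiffOn ℝ 1 (F i) U)
    {w : EuclideanSpace ℝ ι → ℝ} (hw : ContinuousOn w U)
    (hwF : ∀ x ∈ U, w x ≤
      ∑ i ∈ s, fderiv ℝ (F i) x (EuclideanSpace.single i 1) - ∑ i ∈ s, F i x ^ 2) :
    ∫ x, w x * φ x ^ 2 ≤ ∫ x, ‖gradient φ x‖ ^ 2 := by
  set e : ι → EuclideanSpace ℝ ι := fun i => EuclideanSpace.single i 1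
  have hint : ∀ {f}, ContinuousOn f U → Integrable fun x => φ x * f x :=
    hφc.integrable_mul_of_continuousOn hφ.continuous hφU
  have hφU' : ContinuousOn φ U := hφ.continuous.continuousOn
  have hFc : ∀ i ∈ s, ContinuousOn (F i) U := fun i hi => (hF i hi).continuousOn
  have hdivc : ContinuousOn (fun x => ∑ i ∈ s, fderiv ℝ (F i) x (e i)) U :=
    continuousOn_finsetSum s fun i hi =>
      ((hF i hi).continuousOn_fderiv_of_isOpen hU le_rfl).clm_apply continuousOn_const
  have hsqc : ContinuousOn (fun x => ∑ i ∈ s, F i x ^ 2) U :=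
    continuousOn_finsetSum s fun i hi => (hFc i hi).pow 2
  have hfluxc : ContinuousOn (fun x => ∑ i ∈ s, fderiv ℝ φ x (e i) * F i x) U :=
    continuousOn_finsetSum s fun i hi =>
      ((hφ.continuous_fderiv one_ne_zero).clm_apply continuous_const).continuousOn.mul (hFc i hi)
  have hint_div : Integrable fun x => φ x ^ 2 * ∑ i ∈ s, fderiv ℝ (F i) x (e i) :=
    (hint (hφU'.fun_mul hdivc)).congr (.of_forall fun x => by ring)
  have hint_sq : Integrable fun x => φ x ^ 2 * ∑ i ∈ s, F i x ^ 2 :=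
    (hint (hφU'.fun_mul hsqc)).congr (.of_forall fun x => by ring)
  have hint_flux : Integrable fun x => -(2 * φ x * ∑ i ∈ s, fderiv ℝ φ x (e i) * F i x) :=
    ((hint hfluxc).const_mul (-2)).congr (.of_forall fun x => by ring)
  have hint_w : Integrable fun x => w x * φ x ^ 2 :=
    (hint (hφU'.fun_mul hw)).congr (.of_forall fun x => by ring)
  calc ∫ x, w x * φ x ^ 2
      ≤ ∫ x, φ x ^ 2 * ∑ i ∈ s, fderiv ℝ (F i) x (e i) - φ x ^ 2 * ∑ i ∈ s, F i x ^ 2 := by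
        refine integral_mono hint_w (hint_div.sub hint_sq) fun x => ?_
        by_cases hx : x ∈ U
        · rw [← mul_sub, mul_comm]
          exact mul_le_mul_of_nonneg_left (hwF x hx) (sq_nonneg _)
        · simp [image_eq_zero_of_notMem_tsupport fun h => hx (hφU h)]
    _ = ∫ x, -(2 * φ x * ∑ i ∈ s, fderiv ℝ φ x (e i) * F i x) - φ x ^ 2 * ∑ i ∈ s, F i x ^ 2 := by
        rw [integral_sub hint_div hint_sq, integral_sub hint_flux hint_sq, integral_neg,
          integral_sq_mul_sum_fderiv_eq_neg hU hφ hφc hφU s hF]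
    _ ≤ ∫ x, ‖gradient φ x‖ ^ 2 := by
        refine integral_mono (hint_flux.sub hint_sq) (hφc.integrable_norm_gradient_sq hφ)
          fun x => ?_
        linarith [neg_two_mul_sum_mul_le_sum_sq_add_sq_mul_sum_sq s (fun i => fderiv ℝ φ x (e i))
          (F · x) (φ x), sum_sq_fderiv_single_le_norm_gradient_sq s φ x]

end

namespace Waveguide

variable {N : ℕ}

def crossIndices (N : ℕ) : Finset (Fin N) := Finset.univ.filter fun i : Fin N => (i : ℕ) < N - 1

theorem card_crossIndices : (crossIndices N).card = N - 1 := by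
  rw [crossIndices, Fin.card_filter_val_lt]
  omega

theorem crossNorm_sq (x : EuclideanSpace ℝ (Fin N)) :
    crossNorm x ^ 2 = ∑ i ∈ crossIndices N, x i ^ 2 :=
  Real.sq_sqrt (Finset.sum_nonneg fun i _ => sq_nonneg (x i))

@[fun_prop]
theorem continuous_crossNorm : Continuous (crossNorm (N := N)) := by
  unfold crossNorm
  fun_prop

theorem isOpen_setOf_crossNorm_lt_one : IsOpen {x : EuclideanSpace ℝ (Fin N) | crossNorm x < 1} :=
  isOpen_lt continuous_crossNorm continuous_const

theorem crossNorm_sq_lt_one {x : EuclideanSpace ℝ (Fin N)} (hx : crossNorm x < 1) :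
    crossNorm x ^ 2 < 1 :=
  pow_lt_one₀ (Real.sqrt_nonneg _) hx two_ne_zero

theorem contDiff_crossNorm_sq :
    ContDiff ℝ ⊤ fun x : EuclideanSpace ℝ (Fin N) => crossNorm x ^ 2 := by
  simp_rw [crossNorm_sq]
  fun_prop

theorem hasFDerivAt_crossNorm_sq (x : EuclideanSpace ℝ (Fin N)) :
    HasFDerivAt (fun y => crossNorm y ^ 2)
      (∑ j ∈ crossIndices N, (2 * x j) • EuclideanSpace.proj (𝕜 := ℝ) j) x := by
  simp_rw [crossNorm_sq]
  refine HasFDerivAt.fun_sum fun j _ => ?_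
  refine (((EuclideanSpace.proj (𝕜 := ℝ) j).hasFDerivAt (x := x)).pow 2).congr_fderiv ?_
  simp

noncomputable def waveguideField (i : Fin N) (x : EuclideanSpace ℝ (Fin N)) : ℝ :=
  x i / (1 - crossNorm x ^ 2)

noncomputable def waveguideWeight (x : EuclideanSpace ℝ (Fin N)) : ℝ :=
  crossNorm x ^ 2 / (1 - crossNorm x ^ 2) ^ 2

theorem contDiffOn_waveguideField (i : Fin N) :
    ContDiffOn ℝ 1 (waveguideField i) {x | crossNorm x < 1} := by
  refine ContDiffOn.div ?_ ?_ fun x hx => (sub_pos.2 (crossNorm_sq_lt_one hx)).ne'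
  · fun_prop
  · exact (contDiff_const.sub (contDiff_crossNorm_sq.of_le le_top)).contDiffOn

theorem fderiv_waveguideField_single {i : Fin N} (hi : i ∈ crossIndices N)
    {x : EuclideanSpace ℝ (Fin N)} (hx : crossNorm x < 1) :
    fderiv ℝ (waveguideField i) x (EuclideanSpace.single i 1)
      = (1 - crossNorm x ^ 2)⁻¹ + 2 * x i ^ 2 / (1 - crossNorm x ^ 2) ^ 2 := by
  have hne : 1 - crossNorm x ^ 2 ≠ 0 := (sub_pos.2 (crossNorm_sq_lt_one hx)).ne'
  have h : HasFDerivAt (fun y => y i * (1 - crossNorm y ^ 2)⁻¹) _ x :=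
    ((EuclideanSpace.proj (𝕜 := ℝ) i).hasFDerivAt (x := x)).fun_mul
    ((hasDerivAt_inv hne).comp_hasFDerivAt x ((hasFDerivAt_crossNorm_sq x).const_sub 1))
  rw [show waveguideField i = fun y => y i * (1 - crossNorm y ^ 2)⁻¹ from
    funext fun y => div_eq_mul_inv _ _, h.fderiv]
  simp only [PiLp.proj_apply, smul_neg, neg_smul, neg_neg, add_apply, smul_apply, sum_apply,
    PiLp.single_apply, smul_eq_mul, mul_ite, mul_one, mul_zero, Finset.sum_ite_eq', hi, if_true]
  field_simp
  ring

theorem sum_fderiv_waveguideField_sub_sum_sq (hN : 1 ≤ N) {x : EuclideanSpace ℝ (Fin N)}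
    (hx : crossNorm x < 1) :
    ∑ i ∈ crossIndices N, fderiv ℝ (waveguideField i) x (EuclideanSpace.single i 1)
        - ∑ i ∈ crossIndices N, waveguideField i x ^ 2
      = ((N : ℝ) - 1) / (1 - crossNorm x ^ 2) + waveguideWeight x := by
  have hne : 1 - crossNorm x ^ 2 ≠ 0 := (sub_pos.2 (crossNorm_sq_lt_one hx)).ne'
  rw [Finset.sum_congr rfl fun i hi => fderiv_waveguideField_single hi hx]
  simp only [waveguideField, waveguideWeight, div_pow, Finset.sum_add_distrib, ← Finset.sum_div,
    ← Finset.mul_sum, ← crossNorm_sq, Finset.sum_const, card_crossIndices, nsmul_eq_mul,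
    Nat.cast_sub hN]
  field_simp
  ring

theorem continuousOn_waveguideWeight :
    ContinuousOn (waveguideWeight (N := N)) {x | crossNorm x < 1} := by
  refine ContinuousOn.div (by fun_prop) (by fun_prop) fun x hx => ?_
  exact pow_ne_zero 2 (sub_pos.2 (crossNorm_sq_lt_one hx)).ne'

theorem waveguideWeight_nonneg (x : EuclideanSpace ℝ (Fin N)) : 0 ≤ waveguideWeight x := by
  unfold waveguideWeight
  positivity

theorem integrable_waveguideWeight_mul_sq {φ : EuclideanSpace ℝ (Fin N) → ℝ}
    (hφ : Continuous φ) (hφc : HasCompactSupport φ) (hφΩ : tsupport φ ⊆ {x | crossNorm x < 1}) :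
    Integrable fun x => waveguideWeight x * φ x ^ 2 :=
  (hφc.integrable_mul_of_continuousOn hφ hφΩ
    (hφ.continuousOn.fun_mul continuousOn_waveguideWeight)).congr (.of_forall fun x => by ring)

theorem waveguide_hardy (hN : 1 ≤ N) {φ : EuclideanSpace ℝ (Fin N) → ℝ} (hφ : ContDiff ℝ 1 φ)
    (hφc : HasCompactSupport φ) (hφΩ : tsupport φ ⊆ {x | crossNorm x < 1}) :
    ((N : ℝ) - 1) * (∫ x in {x | crossNorm x < 1}, φ x ^ 2)
        + ∫ x in {x | crossNorm x < 1}, waveguideWeight x * φ x ^ 2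
      ≤ ∫ x in {x | crossNorm x < 1}, ‖gradient φ x‖ ^ 2 := by
  have hset : ∀ f : EuclideanSpace ℝ (Fin N) → ℝ, (∀ x ∉ tsupport φ, f x = 0) →
      ∫ x in {x | crossNorm x < 1}, f x = ∫ x, f x := fun f hf =>
    setIntegral_eq_integral_of_forall_compl_eq_zero fun x hx => hf x fun h => hx (hφΩ h)
  rw [hset (fun x => φ x ^ 2) fun x hx => by simp [image_eq_zero_of_notMem_tsupport hx],
    hset (fun x => waveguideWeight x * φ x ^ 2) fun x hx => by
      simp [image_eq_zero_of_notMem_tsupport hx],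
    hset (fun x => ‖gradient φ x‖ ^ 2) fun x hx => by
      simp [gradient, fderiv_of_notMem_tsupport ℝ hx]]
  have hφ2 : Integrable fun x => φ x ^ 2 :=
    (hφc.integrable_mul_of_continuousOn hφ.continuous hφΩ hφ.continuous.continuousOn).congr
      (.of_forall fun x => by ring)
  rw [← integral_const_mul, ← integral_add (hφ2.const_mul _)
    (integrable_waveguideWeight_mul_sq hφ.continuous hφc hφΩ)]
  simp_rw [← add_mul]
  refine integral_mul_sq_le_integral_norm_gradient_sq isOpen_setOf_crossNorm_lt_one hφ hφc hφΩ
    (crossIndices N) (fun i _ => contDiffOn_waveguideField i)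
    (continuousOn_const.add continuousOn_waveguideWeight) fun x hx => ?_
  rw [sum_fderiv_waveguideField_sub_sum_sq hN hx]
  gcongr
  exact le_div_self (by simpa using hN) (sub_pos.2 (crossNorm_sq_lt_one hx))
    (sub_le_self _ (sq_nonneg _))

end Waveguide

open Waveguide

theorem ground_state_waveguide_general {N : ℕ} (hN : 2 ≤ N)
    (Ω : Set (EuclideanSpace ℝ (Fin N)))
    (hΩ : Ω = {x : EuclideanSpace ℝ (Fin N) | crossNorm x < 1})
    {V : EuclideanSpace ℝ (Fin N) → ℝ}
    (hV : ∀ᵐ x ∂(volume.restrict Ω),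
      -((crossNorm x) ^ 2 / (1 - (crossNorm x) ^ 2) ^ 2) ≤ V x ∧ V x ≤ 0)
    (φ : EuclideanSpace ℝ (Fin N) → ℝ) (hφ : ContDiff ℝ (⊤ : ℕ∞) φ)
    (hφc : HasCompactSupport φ) (hφΩ : tsupport φ ⊆ Ω) :
    ((N : ℝ) - 1) * (∫ x in Ω, (φ x) ^ 2)
      ≤ (∫ x in Ω, ‖gradient φ x‖ ^ 2) + ∫ x in Ω, V x * (φ x) ^ 2 := by
  subst hΩ
  have hardy := waveguide_hardy (by omega) (hφ.of_le (by exact_mod_cast le_top)) hφc hφΩ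
  have hV_ge : -∫ x in {x | crossNorm x < 1}, waveguideWeight x * φ x ^ 2
      ≤ ∫ x in {x | crossNorm x < 1}, V x * φ x ^ 2 := by
    by_cases hVφ : Integrable (fun x => V x * φ x ^ 2) (volume.restrict {x | crossNorm x < 1})
    · rw [← integral_neg]
      refine integral_mono_ae
        (integrable_waveguideWeight_mul_sq hφ.continuous hφc hφΩ).integrableOn.neg hVφ ?_
      filter_upwards [hV] with x hx
      rw [← neg_mul]
      exact mul_le_mul_of_nonneg_right hx.1 (sq_nonneg _)
    · rw [integral_undef hVφ, neg_nonpos]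
      exact integral_nonneg fun x => mul_nonneg (waveguideWeight_nonneg x) (sq_nonneg _)
  linarith

/-- **Application to the rectilinear wave-guide with circular cross-section**
`Ω = {(x', x_N) : |x'| < 1}`: for potentials `V` with
`-|x'|²/(1-|x'|²)² ≤ V ≤ 0` a.e. on `Ω`, the quadratic form of `-Δ + V` is bounded
below by `(N-1) ∫ φ²`. -/
theorem ground_state_waveguide {N : ℕ} (hN : 2 ≤ N)
    (Ω : Set (EuclideanSpace ℝ (Fin N)))
    (hΩ : Ω = {x : EuclideanSpace ℝ (Fin N) | crossNorm x < 1})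
    {V : EuclideanSpace ℝ (Fin N) → ℝ} (hVmeas : Measurable V)
    (hV : ∀ᵐ x ∂(volume.restrict Ω),
      -((crossNorm x) ^ 2 / (1 - (crossNorm x) ^ 2) ^ 2) ≤ V x ∧ V x ≤ 0)
    (φ : EuclideanSpace ℝ (Fin N) → ℝ) (hφ : ContDiff ℝ (⊤ : ℕ∞) φ)
    (hφc : HasCompactSupport φ) (hφΩ : tsupport φ ⊆ Ω) :
    ((N : ℝ) - 1) * (∫ x in Ω, (φ x) ^ 2)
      ≤ (∫ x in Ω, ‖gradient φ x‖ ^ 2) + ∫ x in Ω, V x * (φ x) ^ 2 :=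
  ground_state_waveguide_general hN Ω hΩ hV φ hφ hφc hφΩ
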